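/- In the two-school market with C = {c₁, c₂}, students S = {s₁, s₂, s₃} with minority {s₁} and majorities {s₂, s₃}, capacities q_{c₁} = 3, q_{c₂} = 2; priorities ≻_{c₁}: s₁ ≻ s₂ ≻ s₃ and ≻_{c₂}: s₃ ≻ s₂ ≻ s₁; preferences P_{s₁} = P_{s₃}: c₁ then c₂, P_{s₂}: c₂ then c₁; majority quotas (q^M_{c₁}, q^M_{c₂}) = (1, 1) (equivalently reserves (2, 1)): SOSM-Q and SOSM-R both produce the matching μ(c₁) = {s₁, s₃}, μ(c₂) = {s₂}, even though the market is not effectively competitive. -/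

import Mathlib

open Finset
open scoped Classical

/-! School choice with affirmative action: basic definitions.

Students `S` (partitioned into minorities, `minority`, and majorities),
schools `C`; `pref s c c'` means student `s` strictly prefers school `c` to
school `c'`; `prio c s s'` means student `s` has strictly higher priority
than `s'` at school `c`; `acc c s` means `s` is acceptable to `c`;
`q c` is the capacity, `qM c` the majority quota and `rm c` the minority
reserve of school `c`.  A matching is a map `μ : S → Option C`. -/

/-- The set of students assigned to school `c` under `μ`. -/
noncomputable def assigned {S C : Type*} [Fintype S] (μ : S → Option C) (c : C) :
    Finset S :=
  Finset.univ.filter fun s => μ s = some c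

/-- The majority students assigned to `c`. -/
noncomputable def assignedMaj {S C : Type*} [Fintype S] (minority : S → Prop)
    (μ : S → Option C) (c : C) : Finset S :=
  (assigned μ c).filter fun s => ¬ minority s

/-- The minority students assigned to `c`. -/
noncomputable def assignedMin {S C : Type*} [Fintype S] (minority : S → Prop)
    (μ : S → Option C) (c : C) : Finset S :=
  (assigned μ c).filter fun s => minority s

/-- `s` strictly prefers `c` to her assignment under `μ` (all students prefer
any school to being unmatched). -/
def prefersTo {S C : Type*} (pref : S → C → C → Prop) (μ : S → Option C)
    (s : S) (c : C) : Prop :=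
  match μ s with
  | none => True
  | some c' => pref s c c'

/-- `(s, c)` is a blocking pair of `μ` with majority quotas `qM`. -/
def blocksQ {S C : Type*} [Fintype S] (minority : S → Prop)
    (pref : S → C → C → Prop) (prio : C → S → S → Prop) (acc : C → S → Prop)
    (q qM : C → ℕ) (μ : S → Option C) (s : S) (c : C) : Prop :=
  prefersTo pref μ s c ∧
    (((assigned μ c).card < q c ∧ acc c s) ∨
      (minority s ∧ ∃ s' ∈ assigned μ c, prio c s s') ∨
      (¬ minority s ∧ (assignedMaj minority μ c).card < qM c ∧
        ∃ s' ∈ assigned μ c, prio c s s') ∨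
      (¬ minority s ∧ (assignedMaj minority μ c).card = qM c ∧
        ∃ s' ∈ assignedMaj minority μ c, prio c s s'))

/-- `μ` is stable with majority quotas: feasible (capacities and majority
quotas respected), individually rational, and with no blocking pair. -/
def stableQ {S C : Type*} [Fintype S] (minority : S → Prop)
    (pref : S → C → C → Prop) (prio : C → S → S → Prop) (acc : C → S → Prop)
    (q qM : C → ℕ) (μ : S → Option C) : Prop :=
  (∀ c, (assigned μ c).card ≤ q c) ∧
  (∀ c, (assignedMaj minority μ c).card ≤ qM c) ∧
  (∀ s c, μ s = some c → acc c s) ∧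
  ∀ s c, ¬ blocksQ minority pref prio acc q qM μ s c

/-- `(s, c)` is a blocking pair of `μ` with minority reserves `rm`. -/
def blocksR {S C : Type*} [Fintype S] (minority : S → Prop)
    (pref : S → C → C → Prop) (prio : C → S → S → Prop) (acc : C → S → Prop)
    (q rm : C → ℕ) (μ : S → Option C) (s : S) (c : C) : Prop :=
  prefersTo pref μ s c ∧
    (((assigned μ c).card < q c ∧ acc c s) ∨
      (minority s ∧ ∃ s' ∈ assigned μ c, prio c s s') ∨
      (¬ minority s ∧ rm c < (assignedMin minority μ c).card ∧
        ∃ s' ∈ assigned μ c, prio c s s') ∨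
      (¬ minority s ∧ (assignedMin minority μ c).card ≤ rm c ∧
        ∃ s' ∈ assignedMaj minority μ c, prio c s s'))

/-- `μ` is stable with minority reserves: feasible, individually rational,
and with no blocking pair. -/
def stableR {S C : Type*} [Fintype S] (minority : S → Prop)
    (pref : S → C → C → Prop) (prio : C → S → S → Prop) (acc : C → S → Prop)
    (q rm : C → ℕ) (μ : S → Option C) : Prop :=
  (∀ c, (assigned μ c).card ≤ q c) ∧
  (∀ s c, μ s = some c → acc c s) ∧
  ∀ s c, ¬ blocksR minority pref prio acc q rm μ s c

/-- `s` weakly prefers assignment `o1` to assignment `o2`. -/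
def weaklyPrefers {S C : Type*} (pref : S → C → C → Prop) (s : S)
    (o1 o2 : Option C) : Prop :=
  o1 = o2 ∨ ∃ c, o1 = some c ∧ (o2 = none ∨ ∃ c', o2 = some c' ∧ pref s c c')

/-- `μ` is the outcome `f^Q(Γ)` of the student optimal stable mechanism with
majority quotas: it is stable with majority quotas and every student weakly
prefers it to any other such stable matching. -/
def studentOptimalStableQ {S C : Type*} [Fintype S] (minority : S → Prop)
    (pref : S → C → C → Prop) (prio : C → S → S → Prop) (acc : C → S → Prop)
    (q qM : C → ℕ) (μ : S → Option C) : Prop :=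
  stableQ minority pref prio acc q qM μ ∧
    ∀ ν, stableQ minority pref prio acc q qM ν →
      ∀ s, weaklyPrefers pref s (μ s) (ν s)

/-- `μ` is the outcome `f^R(Γ)` of the student optimal stable mechanism with
minority reserves. -/
def studentOptimalStableR {S C : Type*} [Fintype S] (minority : S → Prop)
    (pref : S → C → C → Prop) (prio : C → S → S → Prop) (acc : C → S → Prop)
    (q rm : C → ℕ) (μ : S → Option C) : Prop :=
  stableR minority pref prio acc q rm μ ∧
    ∀ ν, stableR minority pref prio acc q rm ν →
      ∀ s, weaklyPrefers pref s (μ s) (ν s)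

/-- The market is effectively competitive: every school with a positive
minority reserve is the first choice of at least `rm c` minority students. -/
def effectivelyCompetitive {S C : Type*} [Fintype S] (minority : S → Prop)
    (pref : S → C → C → Prop) (rm : C → ℕ) : Prop :=
  ∀ c, 0 < rm c →
    rm c ≤ (Finset.univ.filter fun s : S =>
      minority s ∧ ∀ c' : C, c' ≠ c → pref s c c').card

/-! Every student is matched to her first choice under `μ`, so no student prefers any school to
her assignment: `μ` admits no blocking pair under either affirmative-action policy, and no
matching at all gives any student a strictly better school. The market is not effectively
competitive simply because `c₁` reserves two seats while there is only one minority student. -/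

section TopChoice

variable {S C : Type*} (pref : S → C → C → Prop) (μ : S → Option C)

def ReceivesTopChoice (s : S) : Prop :=
  ∃ c, μ s = some c ∧ ∀ c', c' ≠ c → pref s c c'

variable {pref μ}

theorem ReceivesTopChoice.not_prefersTo {s : S} (h : ReceivesTopChoice pref μ s)
    (hasymm : ∀ c c', pref s c c' → ¬ pref s c' c) (c : C) : ¬ prefersTo pref μ s c := by
  obtain ⟨t, hμ, ht⟩ := h
  unfold prefersTo
  rw [hμ]
  intro hct
  by_cases hc : c = t
  · exact hasymm c t hct (hc ▸ hct)
  · exact hasymm c t hct (ht c hc)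

theorem ReceivesTopChoice.weaklyPrefers {s : S} (h : ReceivesTopChoice pref μ s)
    (o : Option C) : weaklyPrefers pref s (μ s) o := by
  obtain ⟨t, hμ, ht⟩ := h
  rw [hμ]
  rcases o with _ | c
  · exact Or.inr ⟨t, rfl, Or.inl rfl⟩
  · by_cases hc : c = t
    · exact Or.inl (hc ▸ rfl)
    · exact Or.inr ⟨t, rfl, Or.inr ⟨c, rfl, ht c hc⟩⟩

variable [Fintype S] {minority : S → Prop} {prio : C → S → S → Prop} {acc : C → S → Prop}
  {q : C → ℕ}

theorem studentOptimalStableQ_of_forall_receivesTopChoice {qM : C → ℕ}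
    (hcap : ∀ c, (assigned μ c).card ≤ q c)
    (hquota : ∀ c, (assignedMaj minority μ c).card ≤ qM c)
    (hacc : ∀ s c, μ s = some c → acc c s)
    (hasymm : ∀ s c c', pref s c c' → ¬ pref s c' c)
    (htop : ∀ s, ReceivesTopChoice pref μ s) :
    studentOptimalStableQ minority pref prio acc q qM μ :=
  ⟨⟨hcap, hquota, hacc, fun s c hb => (htop s).not_prefersTo (hasymm s) c hb.1⟩,
    fun ν _ s => (htop s).weaklyPrefers (ν s)⟩

theorem studentOptimalStableR_of_forall_receivesTopChoice {rm : C → ℕ}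
    (hcap : ∀ c, (assigned μ c).card ≤ q c)
    (hacc : ∀ s c, μ s = some c → acc c s)
    (hasymm : ∀ s c c', pref s c c' → ¬ pref s c' c)
    (htop : ∀ s, ReceivesTopChoice pref μ s) :
    studentOptimalStableR minority pref prio acc q rm μ :=
  ⟨⟨hcap, hacc, fun s c hb => (htop s).not_prefersTo (hasymm s) c hb.1⟩,
    fun ν _ s => (htop s).weaklyPrefers (ν s)⟩

end TopChoice

theorem not_effectivelyCompetitive_of_card_minority_lt {S C : Type*} [Fintype S]
    {minority : S → Prop} {pref : S → C → C → Prop} {rm : C → ℕ} (c : C)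
    (h : (univ.filter minority).card < rm c) :
    ¬ effectivelyCompetitive minority pref rm := fun hec =>
  (hec c (by omega)).not_gt <| h.trans_le' <|
    card_le_card <| monotone_filter_right _ fun _ _ => And.left

abbrev exampleTwoPref : Fin 3 → Fin 2 → Fin 2 → Prop :=
  fun s c c' => if s = 1 then c = 1 ∧ c' = 0 else c = 0 ∧ c' = 1

abbrev exampleTwoMatching : Fin 3 → Option (Fin 2) := ![some 0, some 1, some 0]

theorem exampleTwoPref_asymm (s : Fin 3) (c c' : Fin 2) :
    exampleTwoPref s c c' → ¬ exampleTwoPref s c' c := by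
  revert s c c'; decide

theorem receivesTopChoice_exampleTwoMatching (s : Fin 3) :
    ReceivesTopChoice exampleTwoPref exampleTwoMatching s := by
  unfold ReceivesTopChoice; revert s; decide

theorem assigned_exampleTwoMatching_zero : assigned exampleTwoMatching 0 = {0, 2} := by
  ext s; fin_cases s <;> simp [assigned]

theorem assigned_exampleTwoMatching_one : assigned exampleTwoMatching 1 = {1} := by
  ext s; fin_cases s <;> simp [assigned]

theorem card_assigned_exampleTwoMatching_le (c : Fin 2) :
    (assigned exampleTwoMatching c).card ≤ ![3, 2] c := by
  fin_cases c
  · simp [assigned_exampleTwoMatching_zero]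
  · simp [assigned_exampleTwoMatching_one]

theorem assignedMaj_exampleTwoMatching_zero :
    assignedMaj (fun s => s = 0) exampleTwoMatching 0 = {2} := by
  ext s; fin_cases s <;> simp [assignedMaj, assigned]

theorem assignedMaj_exampleTwoMatching_one :
    assignedMaj (fun s => s = 0) exampleTwoMatching 1 = {1} := by
  ext s; fin_cases s <;> simp [assignedMaj, assigned]

theorem card_assignedMaj_exampleTwoMatching_le (c : Fin 2) :
    (assignedMaj (fun s => s = 0) exampleTwoMatching c).card ≤ ![1, 1] c := by
  fin_cases c
  · simp [assignedMaj_exampleTwoMatching_zero]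
  · simp [assignedMaj_exampleTwoMatching_one]

/-- **Example 2.** Two schools `c₁ = 0, c₂ = 1` with capacities `3, 2`, three
students `s₁, s₂, s₃ = 0, 1, 2`, minority `{s₁}`; priorities
`≻_{c₁} : s₁ ≻ s₂ ≻ s₃` and `≻_{c₂} : s₃ ≻ s₂ ≻ s₁`; preferences: `s₁, s₃`
rank `c₁` then `c₂`, while `s₂` ranks `c₂` then `c₁`; majority quotas `(1, 1)`
(equivalently minority reserves `(2, 1)`).  Both SOSM-Q and SOSM-R produce the
matching `μ(c₁) = {s₁, s₃}`, `μ(c₂) = {s₂}`, even though the market is not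
effectively competitive. -/
theorem example_two_same_outcome :
    studentOptimalStableQ (S := Fin 3) (C := Fin 2)
        (fun s => s = 0)                                  -- minority s₁
        (fun s c c' => if s = 1 then c = 1 ∧ c' = 0 else c = 0 ∧ c' = 1)
        (fun c s s' => if c = 0 then s < s' else s' < s)  -- priorities
        (fun _ _ => True)                                 -- all acceptable
        ![3, 2]                                           -- capacities (3, 2)
        ![1, 1]                                           -- majority quotas (1, 1)
        ![some 0, some 1, some 0] ∧                       -- μ : s₁ ↦ c₁, s₂ ↦ c₂, s₃ ↦ c₁
    studentOptimalStableR (S := Fin 3) (C := Fin 2)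
        (fun s => s = 0)
        (fun s c c' => if s = 1 then c = 1 ∧ c' = 0 else c = 0 ∧ c' = 1)
        (fun c s s' => if c = 0 then s < s' else s' < s)
        (fun _ _ => True)
        ![3, 2]
        ![2, 1]                                           -- minority reserves (2, 1)
        ![some 0, some 1, some 0] ∧
    ¬ effectivelyCompetitive (S := Fin 3) (C := Fin 2)
        (fun s => s = 0)
        (fun s c c' => if s = 1 then c = 1 ∧ c' = 0 else c = 0 ∧ c' = 1)
        ![2, 1] := by
  exact
    ⟨studentOptimalStableQ_of_forall_receivesTopChoice card_assigned_exampleTwoMatching_le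
        card_assignedMaj_exampleTwoMatching_le (fun _ _ _ => trivial) exampleTwoPref_asymm
        receivesTopChoice_exampleTwoMatching,
      studentOptimalStableR_of_forall_receivesTopChoice card_assigned_exampleTwoMatching_le
        (fun _ _ _ => trivial) exampleTwoPref_asymm receivesTopChoice_exampleTwoMatching,
      not_effectivelyCompetitive_of_card_minority_lt 0 <| by
        simpa using card_le_one.2 fun a ha b hb => by simp_all⟩
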